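/- arXiv:2509.03982 — 6 statements merged into one kernel-verified Lean document; each statement's English description precedes it below -/
import Mathlib

section
/- Let p be a prime and m ≥ 0 an integer. For every natural number n, the following are equivalent: (i) for every integer j ≥ 1, p divides (⌊j/p^m⌋)! · C(n, j), where C(n, j) is the usual binomial coefficient (equal to 0 when j > n); (ii) p^{m+1} divides n. -/
/-- Let `p` be a prime and `m ≥ 0` an integer. For every natural number `n`,
the following are equivalent: (i) for every integer `j ≥ 1`, `p` divides
`(⌊j/p^m⌋)! * C(n, j)`; (ii) `p^(m+1)` divides `n`. -/
theorem factorial_mul_choose_dvd_iff_pow_succ_dvd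
    (p : ℕ) (hp : p.Prime) (m : ℕ) (n : ℕ) :
    (∀ j : ℕ, 1 ≤ j → p ∣ Nat.factorial (j / p ^ m) * Nat.choose n j) ↔
      p ^ (m + 1) ∣ n := by
  haveI : Fact p.Prime := ⟨hp⟩
  have hp0 : 0 < p := hp.pos
  constructor
  · intro h
    by_contra hnd
    set j := n % p ^ (m + 1) with hj
    have hjlt : j < p ^ (m + 1) := Nat.mod_lt _ (pow_pos hp0 _)
    have hj1 : 1 ≤ j := by
      rcases Nat.eq_zero_or_pos j with h0 | h0
      · exact absurd (Nat.dvd_of_mod_eq_zero h0) hnd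
      · exact h0
    -- factorial part is not divisible by p
    have hfac : ¬ p ∣ Nat.factorial (j / p ^ m) := by
      rw [hp.dvd_factorial]
      intro hle
      have : p ^ m * p ≤ j := by
        calc p ^ m * p ≤ p ^ m * (j / p ^ m) := by
              exact Nat.mul_le_mul_left _ hle
          _ ≤ j := Nat.mul_div_le j (p ^ m)
      rw [← pow_succ] at this
      omega
    -- choose part is ≡ 1 mod p by Lucas
    have hlucas := Choose.choose_modEq_choose_mul_prod_range_choose
      (n := n) (k := j) (p := p) (m + 1)
    have hdiv0 : j / p ^ (m + 1) = 0 := Nat.div_eq_of_lt hjlt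
    have hdig : ∀ i ∈ Finset.range (m + 1),
        (Nat.choose (n / p ^ i % p) (j / p ^ i % p) : ℤ) = 1 := by
      intro i hi
      rw [Finset.mem_range] at hi
      have hsplit : p ^ (m + 1) = p ^ i * p ^ (m + 1 - i) := by
        rw [← pow_add]; congr 1; omega
      have : j / p ^ i = n / p ^ i % p ^ (m + 1 - i) := by
        rw [hj, hsplit, Nat.mod_mul_right_div_self]
      rw [this, Nat.mod_mod_of_dvd _ (dvd_pow_self p (by omega)), Nat.choose_self]
      norm_num
    push_cast at hlucas
    rw [Finset.prod_congr rfl hdig, Finset.prod_const_one, mul_one, hdiv0,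
      Nat.choose_zero_right] at hlucas
    have hnotdvd : ¬ p ∣ Nat.choose n j := by
      intro hd
      have h1 : (p : ℤ) ∣ (Nat.choose n j : ℤ) := Int.natCast_dvd_natCast.mpr hd
      have h2 : (p : ℤ) ∣ 1 - (Nat.choose n j : ℤ) := hlucas.dvd
      have h3 : (p : ℤ) ∣ 1 := by
        have := dvd_add h2 h1
        simpa using this
      exact absurd (Int.le_of_dvd one_pos h3) (by exact_mod_cast hp.one_lt.not_ge)
    rcases (hp.dvd_mul.mp (h j hj1)) with h1 | h1
    · exact hfac h1
    · exact hnotdvd h1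
  · intro hd j hj1
    rcases le_or_gt (p ^ (m + 1)) j with hjge | hjlt
    · -- factorial divisible
      refine Dvd.dvd.mul_right ?_ _
      apply Nat.dvd_factorial hp0
      rw [Nat.le_div_iff_mul_le (pow_pos hp0 m)]
      calc p * p ^ m = p ^ (m + 1) := by ring
        _ ≤ j := hjge
    · refine Dvd.dvd.mul_left ?_ _
      rcases le_or_gt j n with hjn | hjn
      swap
      · simp [Nat.choose_eq_zero_of_lt hjn]
      -- main case: 1 ≤ j ≤ n, j < p^(m+1), p^(m+1) ∣ n
      have hn0 : 0 < n := lt_of_lt_of_le hj1 hjn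
      have hC0 : 0 < Nat.choose n j := Nat.choose_pos hjn
      have hid : n * Nat.choose (n - 1) (j - 1) = Nat.choose n j * j := by
        have := Nat.add_one_mul_choose_eq (n - 1) (j - 1)
        simp only [Nat.succ_eq_add_one, Nat.sub_add_cancel hn0,
          Nat.sub_add_cancel hj1] at this
        exact this
      have hdvd : p ^ (m + 1) ∣ Nat.choose n j * j := hid ▸ hd.mul_right _
      have hne : Nat.choose n j * j ≠ 0 := by positivity
      have hle := (Nat.Prime.pow_dvd_iff_le_factorization hp hne).mp hdvd
      rw [Nat.factorization_mul hC0.ne' (by omega)] at hle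
      have hjfac : j.factorization p ≤ m := by
        by_contra hgt
        push_neg at hgt
        have : p ^ (m + 1) ∣ j :=
          (Nat.Prime.pow_dvd_iff_le_factorization hp (by omega)).mpr hgt
        have := Nat.le_of_dvd (by omega) this
        omega
      have : 1 ≤ (Nat.choose n j).factorization p := by
        simp only [Finsupp.add_apply] at hle; omega
      exact pow_one p ▸
        (Nat.Prime.pow_dvd_iff_le_factorization hp hC0.ne').mpr (by simpa using this)
end

section
/- Let p be a prime and m ≥ 0 an integer. For every integer n, the following are equivalent: (i) for every integer j ≥ 1, p divides (⌊j/p^m⌋)! · binom(n, j); (ii) p^{m+1} divides n. -/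
open Finset in
lemma aux_period (p : ℕ) (hp : p.Prime) (m : ℕ) (n : ℤ) (j : ℕ) (hj : j < p ^ (m + 1)) :
    (p : ℤ) ∣ Ring.choose (n + (p ^ (m + 1) : ℕ)) j - Ring.choose n j := by
  rw [Ring.add_choose_eq j (Commute.all _ _)]
  have hmem : ((j, 0) : ℕ × ℕ) ∈ antidiagonal j := by simp
  rw [← Finset.add_sum_erase _ _ hmem, Ring.choose_zero_right, mul_one, add_sub_cancel_left]
  refine Finset.dvd_sum ?_
  intro x hx
  have hx1 := Finset.mem_of_mem_erase hx
  rw [Finset.HasAntidiagonal.mem_antidiagonal] at hx1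
  have hx2 : x.2 ≠ 0 := by
    intro h
    apply Finset.ne_of_mem_erase hx
    have : x.1 = j := by omega
    exact Prod.ext this h
  have hdvd : (p : ℤ) ∣ Ring.choose ((p ^ (m + 1) : ℕ) : ℤ) x.2 := by
    rw [Ring.choose_natCast]
    exact_mod_cast Int.natCast_dvd_natCast.mpr
      (Nat.Prime.dvd_choose_pow hp hx2 (by omega))
  exact Dvd.dvd.mul_left hdvd _

lemma aux_shift (p : ℕ) (hp : p.Prime) (m : ℕ) (j : ℕ) (hj : j < p ^ (m + 1)) (n t : ℤ) :
    (p : ℤ) ∣ Ring.choose (n + (p ^ (m + 1) : ℕ) * t) j - Ring.choose n j := by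
  induction t using Int.induction_on with
  | zero => simp
  | succ k ih =>
      have h1 := aux_period p hp m (n + (p ^ (m + 1) : ℕ) * k) j hj
      have : (n + (p ^ (m + 1) : ℕ) * (k + 1)) = (n + (p ^ (m + 1) : ℕ) * k) + (p ^ (m + 1) : ℕ) := by ring
      rw [this]
      have := dvd_add h1 ih
      simpa using this
  | pred k ih =>
      have h1 := aux_period p hp m (n + (p ^ (m + 1) : ℕ) * (-k - 1)) j hj
      have heq : (n + (p ^ (m + 1) : ℕ) * (-k - 1)) + (p ^ (m + 1) : ℕ) = n + (p ^ (m + 1) : ℕ) * (-k) := by ring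
      rw [heq] at h1
      have := dvd_sub ih h1
      simpa using this


/-- Let `p` be a prime and `m ≥ 0` an integer. For every integer `n`,
the following are equivalent: (i) for every integer `j ≥ 1`, `p` divides
`(⌊j/p^m⌋)! * binom(n, j)`, where `binom` is the integer-valued generalized binomial
coefficient (`Ring.choose` over `ℤ`); (ii) `p^(m+1)` divides `n`. -/
theorem factorial_mul_intChoose_dvd_iff_pow_succ_dvd
    (p : ℕ) (hp : p.Prime) (m : ℕ) (n : ℤ) :
    (∀ j : ℕ, 1 ≤ j → (p : ℤ) ∣ (Nat.factorial (j / p ^ m) : ℤ) * Ring.choose n j) ↔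
      (p : ℤ) ^ (m + 1) ∣ n := by
  have hq : (0:ℤ) < ((p ^ (m+1) : ℕ) : ℤ) := by exact_mod_cast pow_pos hp.pos (m+1)
  constructor
  · intro h
    by_contra hnd
    -- let r = n % p^(m+1)
    set q : ℤ := ((p ^ (m + 1) : ℕ) : ℤ) with hqdef
    have hqq : (p : ℤ) ^ (m + 1) = q := by push_cast [hqdef]; ring
    rw [hqq] at hnd
    have hr0 : 0 ≤ n % q := Int.emod_nonneg n (by positivity)
    have hrlt : n % q < q := Int.emod_lt_of_pos n hq
    have hrne : n % q ≠ 0 := by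
      intro h0
      exact hnd (Int.dvd_of_emod_eq_zero h0)
    set j : ℕ := (n % q).toNat with hjdef
    have hjcast : ((j : ℤ)) = n % q := Int.toNat_of_nonneg hr0
    have hj1 : 1 ≤ j := by
      have h1 : (1:ℤ) ≤ (j:ℤ) := by rw [hjcast]; omega
      exact_mod_cast h1
    have hjlt : j < p ^ (m + 1) := by
      have : (j : ℤ) < ((p ^ (m+1) : ℕ) : ℤ) := by rw [hjcast]; exact hrlt
      exact_mod_cast this
    -- Ring.choose n j ≡ Ring.choose (n % q) j mod p
    have hshift := aux_shift p hp m j hjlt (n % q) (n / q)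
    have hne : n % q + ((p ^ (m + 1) : ℕ) : ℤ) * (n / q) = n := by
      rw [← hqdef]; exact Int.emod_add_mul_ediv n q
    rw [hne] at hshift
    have hval : Ring.choose (n % q) j = 1 := by
      rw [← hjcast, Ring.choose_natCast, Nat.choose_self, Nat.cast_one]
    rw [hval] at hshift
    have hfac : ¬ (p:ℤ) ∣ (Nat.factorial (j / p ^ m) : ℤ) := by
      rw [Int.natCast_dvd_natCast, Nat.Prime.dvd_factorial hp]
      intro hle
      have h1 : p * p ^ m ≤ j := (Nat.le_div_iff_mul_le (pow_pos hp.pos m)).mp hle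
      have h3 : p ^ (m + 1) ≤ j := by
        calc p ^ (m + 1) = p * p ^ m := by rw [pow_succ, mul_comm]
        _ ≤ j := h1
      omega
    have hppr : Prime (p : ℤ) := Nat.prime_iff_prime_int.mp hp
    have := h j hj1
    rcases hppr.dvd_mul.mp this with hd | hd
    · exact hfac hd
    · have : (p : ℤ) ∣ 1 := by
        have := dvd_sub hd hshift
        simpa using this
      exact hppr.not_dvd_one this
  · intro h j hj1
    by_cases hjlt : j < p ^ (m + 1)
    · obtain ⟨t, ht⟩ := h
      have hshift := aux_shift p hp m j hjlt 0 t
      have : (0 : ℤ) + ((p ^ (m + 1) : ℕ) : ℤ) * t = n := by push_cast; linarith [ht]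
      rw [this, Ring.choose_zero_pos ℤ (by omega), sub_zero] at hshift
      exact Dvd.dvd.mul_left hshift _
    · have hple : p ≤ j / p ^ m := by
        rw [Nat.le_div_iff_mul_le (pow_pos hp.pos m)]
        have := Nat.not_lt.mp hjlt
        calc p * p ^ m = p ^ (m+1) := by ring
        _ ≤ j := this
      have : (p:ℤ) ∣ (Nat.factorial (j / p ^ m) : ℤ) :=
        Int.natCast_dvd_natCast.mpr (Nat.dvd_factorial hp.pos hple)
      exact Dvd.dvd.mul_right this _
end

section
/- Let p be a prime, m ≥ 0 an integer, k a field of characteristic p, and d̃ a natural number. For each integer j ≥ 1 let D_j : k[[t]] → k[[t]] be the k-linear operator multiplying the ℓ-th coefficient of a power series by the image in k of (⌊j/p^m⌋)!·binom(ℓ − d̃, j). Then a formal power series f ∈ k[[t]] satisfies D_j f = 0 for all j ≥ 1 if and only if the ℓ-th coefficient of f vanishes for every natural number ℓ with ℓ ≢ d̃ (mod p^{m+1}); equivalently, the joint kernel ∩_{j≥1} Ker D_j equals t^{d̃ mod p^{m+1}} · k[[t^{p^{m+1}}]] inside k[[t]]. -/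
/-- The `k`-linear operator on `k[[t]]` multiplying the `ℓ`-th coefficient of a power
series by the scalar `c ℓ`. -/
noncomputable def coeffMulOp (k : Type*) [Field k] (c : ℕ → k) (f : PowerSeries k) :
    PowerSeries k :=
  PowerSeries.mk fun ℓ => c ℓ * PowerSeries.coeff ℓ f

/-- Periodicity: adding `p^s` does not change `Ring.choose · j` mod `p`, for `j < p^s`. -/
private lemma ringChoose_add_pow_modEq (p : ℕ) (hp : p.Prime) {s j : ℕ} (hj : j < p ^ s)
    (a : ℤ) : Ring.choose (a + ((p ^ s : ℕ) : ℤ)) j ≡ Ring.choose a j [ZMOD p] := by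
  rw [Ring.add_choose_eq j (Commute.all _ _)]
  have hmem : ((j, 0) : ℕ × ℕ) ∈ Finset.HasAntidiagonal.antidiagonal j := by simp
  rw [← Finset.add_sum_erase _ _ hmem]
  have h0 : Ring.choose (a : ℤ) j * Ring.choose (((p ^ s : ℕ) : ℤ)) 0 = Ring.choose a j := by
    rw [Ring.choose_zero_right, mul_one]
  rw [h0]
  have hsum : (p : ℤ) ∣ ∑ x ∈ (Finset.HasAntidiagonal.antidiagonal j).erase (j, 0),
      Ring.choose a x.1 * Ring.choose (((p ^ s : ℕ) : ℤ)) x.2 := by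
    apply Finset.dvd_sum
    rintro ⟨x, y⟩ hxy
    simp only [Finset.mem_erase, Finset.HasAntidiagonal.mem_antidiagonal] at hxy
    have hy0 : y ≠ 0 := by
      rintro rfl
      exact hxy.1 (by simp [← hxy.2])
    have hyps : y ≠ p ^ s := by
      rintro rfl
      omega
    have hdvd : (p : ℤ) ∣ Ring.choose (((p ^ s : ℕ) : ℤ)) y := by
      rw [Ring.choose_natCast]
      exact_mod_cast Int.natCast_dvd_natCast.mpr (hp.dvd_choose_pow hy0 hyps)
    exact hdvd.mul_left _
  calc Ring.choose a j + ∑ x ∈ (Finset.HasAntidiagonal.antidiagonal j).erase (j, 0),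
        Ring.choose a x.1 * Ring.choose (((p ^ s : ℕ) : ℤ)) x.2
      ≡ Ring.choose a j + 0 [ZMOD p] :=
        Int.ModEq.add_left _ ((Int.modEq_zero_iff_dvd).mpr hsum)
    _ = Ring.choose a j := by rw [add_zero]

/-- Adding an integer multiple of `p^s` does not change `Ring.choose · j` mod `p`. -/
private lemma ringChoose_add_mul_pow_modEq (p : ℕ) (hp : p.Prime) {s j : ℕ} (hj : j < p ^ s)
    (a c : ℤ) : Ring.choose (a + c * ((p ^ s : ℕ) : ℤ)) j ≡ Ring.choose a j [ZMOD p] := by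
  induction c using Int.induction_on with
  | zero => simp
  | succ n ih =>
      have heq : a + ((n : ℤ) + 1) * ((p ^ s : ℕ) : ℤ)
          = (a + (n : ℤ) * ((p ^ s : ℕ) : ℤ)) + ((p ^ s : ℕ) : ℤ) := by ring
      rw [heq]
      exact (ringChoose_add_pow_modEq p hp hj _).trans ih
  | pred n ih =>
      have key := ringChoose_add_pow_modEq p hp hj (a + (-(n : ℤ) - 1) * ((p ^ s : ℕ) : ℤ))
      have heq : a + (-(n : ℤ) - 1) * ((p ^ s : ℕ) : ℤ) + ((p ^ s : ℕ) : ℤ)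
          = a + (-(n : ℤ)) * ((p ^ s : ℕ) : ℤ) := by ring
      rw [heq] at key
      exact key.symm.trans ih

/-- `Ring.choose n j` mod `p` agrees with the natural binomial coefficient of the
representative of `n` modulo `p^s`, for `j < p^s`. -/
private lemma ringChoose_modEq_natChoose (p : ℕ) (hp : p.Prime) {s j : ℕ} (hj : j < p ^ s)
    (n : ℤ) : Ring.choose n j ≡ (Nat.choose (n % ((p ^ s : ℕ) : ℤ)).toNat j : ℤ) [ZMOD p] := by
  have hP : (0 : ℤ) < ((p ^ s : ℕ) : ℤ) := by exact_mod_cast pow_pos hp.pos s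
  set r : ℕ := (n % ((p ^ s : ℕ) : ℤ)).toNat with hr
  have hrval : (r : ℤ) = n % ((p ^ s : ℕ) : ℤ) := Int.toNat_of_nonneg (Int.emod_nonneg n hP.ne')
  have hn : n = (r : ℤ) + (n / ((p ^ s : ℕ) : ℤ)) * ((p ^ s : ℕ) : ℤ) := by
    rw [hrval, mul_comm]
    exact (Int.emod_add_mul_ediv n _).symm
  calc Ring.choose n j ≡ Ring.choose (r : ℤ) j [ZMOD p] := by
        rw [hn]; exact ringChoose_add_mul_pow_modEq p hp hj _ _
    _ = (Nat.choose r j : ℤ) := by rw [Ring.choose_natCast]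

/-- `p` does not divide `binom(r, a·p^i)` where `a` is the `i`-th base-`p` digit of `r`. -/
private lemma not_dvd_choose_digit (p : ℕ) (hp : p.Prime) :
    ∀ (i r : ℕ), ¬ p ∣ Nat.choose r (r / p ^ i % p * p ^ i) := by
  haveI : Fact p.Prime := ⟨hp⟩
  intro i
  induction i with
  | zero =>
      intro r hdvd
      simp only [pow_zero, Nat.div_one, mul_one] at hdvd
      have hlt : r % p < p := Nat.mod_lt _ hp.pos
      have hluc := Choose.choose_modEq_choose_mod_mul_choose_div_nat
        (p := p) (n := r) (k := r % p)
      rw [Nat.mod_mod_of_dvd r dvd_rfl, Nat.choose_self, Nat.div_eq_of_lt hlt,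
        Nat.choose_zero_right, mul_one] at hluc
      have h0 : Nat.choose r (r % p) ≡ 0 [MOD p] := (Nat.modEq_zero_iff_dvd).mpr hdvd
      have h1 : p ∣ 1 := (Nat.modEq_zero_iff_dvd).mp (hluc.symm.trans h0)
      exact hp.one_lt.ne' (Nat.dvd_one.mp h1)
  | succ i ih =>
      intro r hdvd
      have hsplit : r / p ^ (i + 1) = r / p / p ^ i := by
        rw [Nat.div_div_eq_div_mul, ← pow_succ']
      rw [hsplit] at hdvd
      set a := r / p / p ^ i % p with ha
      have hjmod : (a * p ^ (i + 1)) % p = 0 := by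
        rw [pow_succ, ← mul_assoc, Nat.mul_mod_left]
      have hjdiv : (a * p ^ (i + 1)) / p = a * p ^ i := by
        rw [pow_succ, ← mul_assoc, Nat.mul_div_cancel _ hp.pos]
      have hluc := Choose.choose_modEq_choose_mod_mul_choose_div_nat
        (p := p) (n := r) (k := a * p ^ (i + 1))
      rw [hjmod, hjdiv, Nat.choose_zero_right, one_mul] at hluc
      have h0 : p ∣ Nat.choose (r / p) (a * p ^ i) :=
        (Nat.modEq_zero_iff_dvd).mp (hluc.symm.trans ((Nat.modEq_zero_iff_dvd).mpr hdvd))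
      exact ih (r / p) h0

/-- Let `p` be a prime, `m ≥ 0` an integer, `k` a field of characteristic
`p`, and `d̃` a natural number. For each integer `j ≥ 1` let `D_j : k[[t]] → k[[t]]` be the
`k`-linear operator multiplying the `ℓ`-th coefficient of a power series by the image in
`k` of `(⌊j/p^m⌋)! · binom(ℓ − d̃, j)`. Then `f ∈ k[[t]]` satisfies `D_j f = 0` for all
`j ≥ 1` if and only if the `ℓ`-th coefficient of `f` vanishes for every natural number `ℓ`
with `ℓ ≢ d̃ (mod p^(m+1))`. -/
theorem mem_jointKernel_iff_coeff_vanish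
    (p : ℕ) (hp : p.Prime) (m : ℕ) (k : Type*) [Field k] [CharP k p]
    (d : ℕ) (f : PowerSeries k) :
    (∀ j : ℕ, 1 ≤ j →
        coeffMulOp k
          (fun ℓ => (((Nat.factorial (j / p ^ m) : ℤ) *
              Ring.choose ((ℓ : ℤ) - (d : ℤ)) j : ℤ) : k)) f = 0) ↔
      (∀ ℓ : ℕ, ¬ ℓ ≡ d [MOD p ^ (m + 1)] → PowerSeries.coeff ℓ f = 0) := by
  haveI : Fact p.Prime := ⟨hp⟩
  have hcast : ∀ (a : ℤ), ((a : k) = 0) ↔ (p : ℤ) ∣ a := fun a => CharP.intCast_eq_zero_iff k p a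
  have hPpos : 0 < p ^ (m + 1) := pow_pos hp.pos _
  have hPz : (0 : ℤ) < ((p ^ (m + 1) : ℕ) : ℤ) := by exact_mod_cast hPpos
  constructor
  · intro h ℓ hℓ
    set n : ℤ := (ℓ : ℤ) - d with hn
    set r : ℕ := (n % ((p ^ (m + 1) : ℕ) : ℤ)).toNat with hrdef
    have hrval : (r : ℤ) = n % ((p ^ (m + 1) : ℕ) : ℤ) :=
      Int.toNat_of_nonneg (Int.emod_nonneg n hPz.ne')
    have hrlt : r < p ^ (m + 1) := by
      have : (r : ℤ) < ((p ^ (m + 1) : ℕ) : ℤ) := by rw [hrval]; exact Int.emod_lt_of_pos n hPz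
      exact_mod_cast this
    have hr0 : r ≠ 0 := by
      rintro h0
      apply hℓ
      have hdv : ((p ^ (m + 1) : ℕ) : ℤ) ∣ n := by
        rw [Int.dvd_iff_emod_eq_zero, ← hrval, h0]; rfl
      rw [Nat.modEq_iff_dvd]
      have : (d : ℤ) - (ℓ : ℤ) = -n := by rw [hn]; ring
      rw [this]
      exact dvd_neg.mpr hdv
    set i := Nat.log p r with hi
    have h1 : p ^ i ≤ r := Nat.pow_log_le_self p hr0
    have h2 : r < p ^ (i + 1) := Nat.lt_pow_succ_log_self hp.one_lt r
    have him : i + 1 ≤ m + 1 := by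
      have hpow : p ^ i < p ^ (m + 1) := lt_of_le_of_lt h1 hrlt
      exact (Nat.pow_lt_pow_iff_right hp.one_lt).mp hpow
    set a := r / p ^ i with ha
    have ha1 : 1 ≤ a := (Nat.one_le_div_iff (pow_pos hp.pos i)).mpr h1
    have hap : a < p := by
      rw [ha, Nat.div_lt_iff_lt_mul (pow_pos hp.pos i), ← pow_succ']
      exact h2
    set j := a * p ^ i with hj
    have hj1 : 1 ≤ j := Nat.one_le_iff_ne_zero.mpr
      (Nat.mul_ne_zero (by omega) (pow_pos hp.pos i).ne')
    have hjlt : j < p ^ (m + 1) :=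
      calc j < p ^ i * p := by
            rw [hj, mul_comm]
            exact (mul_lt_mul_iff_right₀ (pow_pos hp.pos i)).mpr hap
        _ = p ^ (i + 1) := (pow_succ p i).symm
        _ ≤ p ^ (m + 1) := Nat.pow_le_pow_right hp.pos him
    have hqlt : j / p ^ m < p := by
      rw [Nat.div_lt_iff_lt_mul (pow_pos hp.pos m), ← pow_succ']
      exact hjlt
    have hqfact : ¬ p ∣ (j / p ^ m).factorial := fun hdv => by
      have := (Nat.Prime.dvd_factorial hp).mp hdv
      omega
    have hchoose : ¬ p ∣ Nat.choose r j := by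
      have hnd := not_dvd_choose_digit p hp i r
      have haa : r / p ^ i % p = a := by rw [← ha]; exact Nat.mod_eq_of_lt hap
      rwa [haa] at hnd
    have hring : Ring.choose n j ≡ (Nat.choose r j : ℤ) [ZMOD p] :=
      ringChoose_modEq_natChoose p hp (s := m + 1) hjlt n
    have hscalar : ¬ (p : ℤ) ∣ ((j / p ^ m).factorial : ℤ) * Ring.choose n j := by
      intro hdv
      rcases (Nat.prime_iff_prime_int.mp hp).dvd_mul.mp hdv with hc | hc
      · exact hqfact (Int.natCast_dvd_natCast.mp hc)
      · have hd2 : (p : ℤ) ∣ (Nat.choose r j : ℤ) :=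
          (Int.modEq_zero_iff_dvd).mp (hring.symm.trans ((Int.modEq_zero_iff_dvd).mpr hc))
        exact hchoose (Int.natCast_dvd_natCast.mp hd2)
    have hD := congrArg (PowerSeries.coeff ℓ) (h j hj1)
    rw [coeffMulOp, PowerSeries.coeff_mk, map_zero] at hD
    rcases mul_eq_zero.mp hD with hc | hf
    · exact absurd ((hcast _).mp hc) hscalar
    · exact hf
  · intro h j hj
    ext ℓ
    rw [coeffMulOp, PowerSeries.coeff_mk, map_zero]
    by_cases hℓ : ℓ ≡ d [MOD p ^ (m + 1)]
    · have hdvd : (p : ℤ) ∣ ((j / p ^ m).factorial : ℤ) * Ring.choose ((ℓ : ℤ) - d) j := by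
        by_cases hjP : j < p ^ (m + 1)
        · have hnd : ((p ^ (m + 1) : ℕ) : ℤ) ∣ (ℓ : ℤ) - d := by
            have hd1 := (Nat.modEq_iff_dvd).mp hℓ
            have : (ℓ : ℤ) - (d : ℤ) = -((d : ℤ) - (ℓ : ℤ)) := by ring
            rw [this]
            exact dvd_neg.mpr hd1
          have hmod : ((ℓ : ℤ) - d) % ((p ^ (m + 1) : ℕ) : ℤ) = 0 :=
            Int.emod_eq_zero_of_dvd hnd
          have hring := ringChoose_modEq_natChoose p hp (s := m + 1) hjP ((ℓ : ℤ) - d)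
          rw [hmod] at hring
          have hc0 : Nat.choose (Int.toNat 0) j = 0 := by
            rw [Int.toNat_zero]
            exact Nat.choose_eq_zero_of_lt (by omega)
          rw [hc0] at hring
          exact Dvd.dvd.mul_left ((Int.modEq_zero_iff_dvd).mp (by exact_mod_cast hring)) _
        · push_neg at hjP
          have hq : p ≤ j / p ^ m := by
            rw [Nat.le_div_iff_mul_le (pow_pos hp.pos m)]
            calc p * p ^ m = p ^ (m + 1) := by rw [pow_succ, mul_comm]
              _ ≤ j := hjP
          have : (p : ℤ) ∣ ((j / p ^ m).factorial : ℤ) :=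
            Int.natCast_dvd_natCast.mpr ((Nat.Prime.dvd_factorial hp).mpr hq)
          exact this.mul_right _
      rw [(hcast _).mpr hdvd, zero_mul]
    · rw [h ℓ hℓ, mul_zero]
end

section
/- Let p be a prime, m ≥ 0 an integer, k a field of characteristic p, and d̃ a natural number with 0 ≤ d̃ < p^{m+1}. With D_j : k[[t]] → k[[t]] the k-linear operator multiplying the ℓ-th coefficient by the image in k of (⌊j/p^m⌋)!·binom(ℓ − d̃, j), there exists a formal power series f ∈ k[[t]] with D_j f = 0 for all j ≥ 1 and with nonzero constant coefficient if and only if d̃ = 0. -/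
/-- Generalized binomial coefficient at a negative integer:
`C(-d, j) = (-1)^j C(d+j-1, j)` for `d, j ≥ 1`. -/
lemma ringChoose_neg_nat (d j : ℕ) (hd : 1 ≤ d) (hj : 1 ≤ j) :
    Ring.choose (-(d : ℤ)) j = (-1) ^ j * ((d + j - 1).choose j : ℤ) := by
  have h1 : (-(d : ℤ)) - j + 1 = Int.negSucc (d + j - 2) := by
    rw [Int.negSucc_eq]
    have : ((d + j - 2 : ℕ) : ℤ) = (d : ℤ) + j - 2 := by
      have : 2 ≤ d + j := by omega
      push_cast [this]
      ring
    rw [this]; ring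
  rw [Ring.choose, h1]
  show Int.multichoose (Int.negSucc (d + j - 2)) j = _
  have h2 : d + j - 2 + 1 = d + j - 1 := by omega
  show (-1) ^ j * ((d + j - 2 + 1).choose j : ℤ) = _
  rw [h2]

/-- In a field of characteristic `p`, `C(p^s - 1, j) = (-1)^j` for `j < p^s`. -/
lemma choose_pow_sub_one_cast (p : ℕ) (hp : p.Prime) (k : Type*) [Field k] [CharP k p]
    (s : ℕ) : ∀ j : ℕ, j < p ^ s → (((p ^ s - 1).choose j : ℕ) : k) = (-1) ^ j := by
  intro j
  induction j with
  | zero => intro _; simp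
  | succ j ih =>
    intro hj
    have hj' : j < p ^ s := by omega
    have hps : 1 ≤ p ^ s := Nat.one_le_pow _ _ hp.pos
    have hpascal : (p ^ s).choose (j + 1) = (p ^ s - 1).choose j + (p ^ s - 1).choose (j + 1) := by
      conv_lhs => rw [show p ^ s = (p ^ s - 1) + 1 by omega]
      exact Nat.choose_succ_succ' _ _
    have hdvd : p ∣ (p ^ s).choose (j + 1) :=
      hp.dvd_choose_pow (by omega) (by omega)
    have hzero : (((p ^ s).choose (j + 1) : ℕ) : k) = 0 :=
      (CharP.cast_eq_zero_iff k p _).2 hdvd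
    rw [hpascal] at hzero
    push_cast at hzero
    have := ih hj'
    rw [this] at hzero
    have : (((p ^ s - 1).choose (j + 1) : ℕ) : k) = -(-1) ^ j := by linear_combination hzero
    rw [this, pow_succ]
    ring

/-- Let `p` be a prime, `m ≥ 0` an integer, `k` a field of characteristic
`p`, and `d̃` a natural number with `0 ≤ d̃ < p^(m+1)`. With `D_j : k[[t]] → k[[t]]` the
`k`-linear operator multiplying the `ℓ`-th coefficient by the image in `k` of
`(⌊j/p^m⌋)! · binom(ℓ − d̃, j)`, there exists a formal power series `f ∈ k[[t]]` with
`D_j f = 0` for all `j ≥ 1` and with nonzero constant coefficient if and only if `d̃ = 0`. -/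
theorem exists_solution_unit_constantCoeff_iff
    (p : ℕ) (hp : p.Prime) (m : ℕ) (k : Type*) [Field k] [CharP k p]
    (d : ℕ) (hd : d < p ^ (m + 1)) :
    (∃ f : PowerSeries k,
        (∀ j : ℕ, 1 ≤ j →
          coeffMulOp k
            (fun ℓ => (((Nat.factorial (j / p ^ m) : ℤ) *
                Ring.choose ((ℓ : ℤ) - (d : ℤ)) j : ℤ) : k)) f = 0) ∧
        PowerSeries.constantCoeff f ≠ 0) ↔
      d = 0 := by
  constructor
  · rintro ⟨f, hD, h0⟩
    by_contra hd0
    have hd1 : 1 ≤ d := Nat.one_le_iff_ne_zero.2 hd0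
    set j : ℕ := p ^ (m + 1) - d with hjdef
    have hj1 : 1 ≤ j := by omega
    have hjlt : j < p ^ (m + 1) := by omega
    have key := congrArg (PowerSeries.coeff 0) (hD j hj1)
    rw [coeffMulOp, PowerSeries.coeff_mk, map_zero] at key
    -- the scalar at ℓ = 0
    have hc : (((Nat.factorial (j / p ^ m) : ℤ) *
        Ring.choose (((0 : ℕ) : ℤ) - (d : ℤ)) j : ℤ) : k) ≠ 0 := by
      have hneg : (((0 : ℕ) : ℤ) - (d : ℤ)) = -(d : ℤ) := by push_cast; ring
      rw [hneg, ringChoose_neg_nat d j hd1 hj1]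
      have hdj : d + j - 1 = p ^ (m + 1) - 1 := by omega
      rw [hdj]
      push_cast
      rw [choose_pow_sub_one_cast p hp k (m + 1) j hjlt]
      have hfact : ((Nat.factorial (j / p ^ m) : ℕ) : k) ≠ 0 := by
        rw [Ne, CharP.cast_eq_zero_iff k p]
        rw [hp.dvd_factorial, not_le]
        have hpm : 0 < p ^ m := pow_pos hp.pos m
        rw [Nat.div_lt_iff_lt_mul hpm]
        calc j < p ^ (m + 1) := hjlt
          _ = p * p ^ m := by rw [pow_succ]; ring
      have hne : ((-1 : k) ^ j) * ((-1 : k) ^ j) = 1 := by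
        rw [← pow_add, ← two_mul, pow_mul]; norm_num
      intro hcontra
      apply hfact
      rwa [hne, mul_one] at hcontra
    have : PowerSeries.coeff 0 f = 0 := by
      rcases mul_eq_zero.1 key with h | h
      · exact absurd h hc
      · exact h
    rw [PowerSeries.coeff_zero_eq_constantCoeff] at this
    exact h0 this
  · rintro rfl
    refine ⟨1, fun j hj => ?_, by simp⟩
    ext ℓ
    rw [coeffMulOp, PowerSeries.coeff_mk, map_zero]
    rcases Nat.eq_zero_or_pos ℓ with rfl | hl
    · have : (((0 : ℕ) : ℤ) - ((0 : ℕ) : ℤ)) = (0 : ℤ) := by simp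
      rw [this, Ring.choose_zero_pos ℤ hj]
      simp
    · rw [PowerSeries.coeff_one]
      simp [Nat.pos_iff_ne_zero.1 hl]
end

section
/- Let p be a prime, k a field of characteristic p, d̃ a natural number, and a a natural number. Let Θ_a : k[[t]] → k[[t]] be the k-linear operator multiplying the ℓ-th coefficient of a power series by the image in k of binom(ℓ − d̃, p^a). Let V_a (resp. V_{a+1}) be the subspace of k[[t]] consisting of series whose ℓ-th coefficient vanishes unless ℓ ≡ d̃ (mod p^a) (resp. unless ℓ ≡ d̃ (mod p^{a+1})). Then {f ∈ V_a : Θ_a f = 0} = V_{a+1}. -/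
open Finset in
lemma lucas_digit (p : ℕ) (hp : p.Prime) (a M : ℕ) :
    ((Nat.choose (M * p ^ a) (p ^ a) : ℤ) : ZMod p) = (M : ZMod p) := by
  haveI : Fact p.Prime := ⟨hp⟩
  have h := Choose.choose_modEq_choose_mul_prod_range_choose (p := p) (n := M * p ^ a)
    (k := p ^ a) a
  rw [← ZMod.intCast_eq_intCast_iff] at h
  rw [h]
  have hp0 : 0 < p ^ a := pow_pos hp.pos a
  have h1 : M * p ^ a / p ^ a = M := Nat.mul_div_cancel M hp0
  have h2 : p ^ a / p ^ a = 1 := Nat.div_self hp0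
  have hprod : ∏ i ∈ range a, Nat.choose (M * p ^ a / p ^ i % p) (p ^ a / p ^ i % p) = 1 := by
    apply Finset.prod_eq_one
    intro i hi
    have hia : i < a := mem_range.mp hi
    have : p ^ a / p ^ i % p = 0 := by
      rw [Nat.pow_div hia.le hp.pos]
      have : a - i = (a - i - 1) + 1 := by omega
      rw [this, pow_succ, Nat.mul_mod_left]
    rw [this, Nat.choose_zero_right]
  rw [h1, h2, hprod, Nat.choose_one_right]
  push_cast
  ring

open Finset in
lemma choose_period (p : ℕ) (hp : p.Prime) (a : ℕ) (n : ℤ) :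
    ((Ring.choose (n + (p : ℤ) ^ (a + 1)) (p ^ a) : ℤ) : ZMod p)
      = ((Ring.choose n (p ^ a) : ℤ) : ZMod p) := by
  rw [Ring.add_choose_eq _ (Commute.all _ _), Int.cast_sum]
  rw [Finset.sum_eq_single ((p ^ a, 0) : ℕ × ℕ)]
  · simp
  · intro b hb hne
    have hsum : b.1 + b.2 = p ^ a := Finset.HasAntidiagonal.mem_antidiagonal.mp hb
    have hb2 : b.2 ≠ 0 := by
      intro h0
      apply hne
      have : b.1 = p ^ a := by omega
      exact Prod.ext this h0
    have hlt : b.2 ≠ p ^ (a + 1) := by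
      have : b.2 ≤ p ^ a := by omega
      have hlt' : p ^ a < p ^ (a + 1) := pow_lt_pow_right₀ hp.one_lt (Nat.lt_succ_self a)
      omega
    have hcast : Ring.choose ((p : ℤ) ^ (a + 1)) b.2 = (Nat.choose (p ^ (a + 1)) b.2 : ℤ) := by
      rw [show ((p : ℤ) ^ (a + 1)) = ((p ^ (a + 1) : ℕ) : ℤ) by push_cast; ring,
        Ring.choose_natCast]
    have hdvd : p ∣ Nat.choose (p ^ (a + 1)) b.2 := hp.dvd_choose_pow hb2 hlt
    rw [hcast, Int.cast_mul]
    have : ((Nat.choose (p ^ (a + 1)) b.2 : ℤ) : ZMod p) = 0 := by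
      rw [ZMod.intCast_zmod_eq_zero_iff_dvd]
      exact_mod_cast Int.natCast_dvd_natCast.mpr hdvd
    rw [this, mul_zero]
  · intro h
    exact absurd (Finset.HasAntidiagonal.mem_antidiagonal.mpr (by simp)) h

lemma choose_period' (p : ℕ) (hp : p.Prime) (a : ℕ) (t : ℕ) (n : ℤ) :
    ((Ring.choose (n + t * (p : ℤ) ^ (a + 1)) (p ^ a) : ℤ) : ZMod p)
      = ((Ring.choose n (p ^ a) : ℤ) : ZMod p) := by
  induction t with
  | zero => simp
  | succ t ih =>
    have : n + (t + 1 : ℕ) * (p : ℤ) ^ (a + 1)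
        = (n + t * (p : ℤ) ^ (a + 1)) + (p : ℤ) ^ (a + 1) := by push_cast; ring
    rw [this, choose_period p hp a, ih]

lemma key_cast (p : ℕ) (hp : p.Prime) (a : ℕ) (m : ℤ) :
    ((Ring.choose (m * (p : ℤ) ^ a) (p ^ a) : ℤ) : ZMod p) = (m : ZMod p) := by
  set t : ℕ := m.natAbs with ht
  have hM : 0 ≤ m + t * p := by
    have : (t : ℤ) = |m| ∨ True := Or.inr trivial
    have habs : (m.natAbs : ℤ) = |m| := Int.abs_eq_natAbs m |>.symm
    have hp1 : (1 : ℤ) ≤ p := by exact_mod_cast hp.one_lt.le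
    nlinarith [abs_nonneg m, neg_abs_le m]
  obtain ⟨M, hMeq⟩ := Int.eq_ofNat_of_zero_le hM
  have heq : m * (p : ℤ) ^ a + t * (p : ℤ) ^ (a + 1) = (M : ℤ) * (p : ℤ) ^ a := by
    rw [← hMeq]; ring
  have h1 := choose_period' p hp a t (m * (p : ℤ) ^ a)
  rw [heq] at h1
  have h2 : Ring.choose ((M : ℤ) * (p : ℤ) ^ a) (p ^ a)
      = (Nat.choose (M * p ^ a) (p ^ a) : ℤ) := by
    rw [show ((M : ℤ) * (p : ℤ) ^ a) = ((M * p ^ a : ℕ) : ℤ) by push_cast; ring,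
      Ring.choose_natCast]
  rw [h2, lucas_digit p hp a M] at h1
  rw [← h1]
  have : ((M : ℤ) : ZMod p) = (M : ZMod p) := by push_cast; ring
  rw [← this, ← hMeq]
  push_cast
  simp

lemma cast_choose_eq (p : ℕ) (hp : p.Prime) (k : Type*) [Field k] [CharP k p] (a : ℕ) (m : ℤ) :
    ((Ring.choose (m * (p : ℤ) ^ a) (p ^ a) : ℤ) : k) = ((m : ℤ) : k) := by
  have h := key_cast p hp a m
  rw [ZMod.intCast_eq_intCast_iff] at h
  have hd : ((p : ℕ) : ℤ) ∣ (Ring.choose (m * (p : ℤ) ^ a) (p ^ a) - m) := h.symm.dvd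
  have h0 := (CharP.intCast_eq_zero_iff k p _).mpr hd
  rw [Int.cast_sub] at h0
  exact sub_eq_zero.mp h0


/-- Let `p` be a prime, `k` a field of characteristic `p`, `d̃` a natural
number, and `a` a natural number. Let `Θ_a : k[[t]] → k[[t]]` be the `k`-linear operator
multiplying the `ℓ`-th coefficient of a power series by the image in `k` of
`binom(ℓ − d̃, p^a)`. Let `V_a` (resp. `V_{a+1}`) be the subspace of `k[[t]]` consisting of
series whose `ℓ`-th coefficient vanishes unless `ℓ ≡ d̃ (mod p^a)` (resp. unless
`ℓ ≡ d̃ (mod p^(a+1))`). Then `{f ∈ V_a : Θ_a f = 0} = V_{a+1}`. -/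
theorem kernel_theta_eq_next_level
    (p : ℕ) (hp : p.Prime) (k : Type*) [Field k] [CharP k p] (d a : ℕ)
    (f : PowerSeries k) :
    ((∀ ℓ : ℕ, ¬ ℓ ≡ d [MOD p ^ a] → PowerSeries.coeff ℓ f = 0) ∧
        coeffMulOp k
          (fun ℓ => ((Ring.choose ((ℓ : ℤ) - (d : ℤ)) (p ^ a) : ℤ) : k)) f = 0) ↔
      (∀ ℓ : ℕ, ¬ ℓ ≡ d [MOD p ^ (a + 1)] → PowerSeries.coeff ℓ f = 0) := by
  have hpa0 : ((p : ℤ) ^ a) ≠ 0 := by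
    have := hp.pos
    positivity
  -- for ℓ ≡ d mod p^a, extract the quotient m
  have hmod : ∀ ℓ : ℕ, ℓ ≡ d [MOD p ^ a] → ∃ m : ℤ, (ℓ : ℤ) - (d : ℤ) = m * (p : ℤ) ^ a := by
    intro ℓ h
    obtain ⟨c, hc⟩ := h.dvd
    exact ⟨-c, by push_cast at hc ⊢; linarith⟩
  have hiff : ∀ (ℓ : ℕ) (m : ℤ), (ℓ : ℤ) - (d : ℤ) = m * (p : ℤ) ^ a →
      ((ℓ ≡ d [MOD p ^ (a + 1)]) ↔ (p : ℤ) ∣ m) := by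
    intro ℓ m h
    rw [Nat.modEq_iff_dvd]
    push_cast
    rw [show (d : ℤ) - ℓ = -(m * (p : ℤ) ^ a) by linarith, dvd_neg]
    constructor
    · rintro ⟨c, hc⟩
      refine ⟨c, ?_⟩
      have : m * (p : ℤ) ^ a = (p * c) * (p : ℤ) ^ a := by rw [hc]; ring
      exact mul_right_cancel₀ hpa0 this
    · rintro ⟨c, hc⟩
      exact ⟨c, by rw [hc]; ring⟩
  have hcval : ∀ (ℓ : ℕ) (m : ℤ), (ℓ : ℤ) - (d : ℤ) = m * (p : ℤ) ^ a →
      ((Ring.choose ((ℓ : ℤ) - (d : ℤ)) (p ^ a) : ℤ) : k) = ((m : ℤ) : k) := by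
    intro ℓ m h
    rw [h]
    exact cast_choose_eq p hp k a m
  have hsucc : ∀ ℓ : ℕ, ℓ ≡ d [MOD p ^ (a + 1)] → ℓ ≡ d [MOD p ^ a] :=
    fun ℓ h => h.of_dvd (pow_dvd_pow p (Nat.le_succ a))
  constructor
  · rintro ⟨hVa, hΘ⟩ ℓ hℓ
    by_cases h : ℓ ≡ d [MOD p ^ a]
    · obtain ⟨m, hm⟩ := hmod ℓ h
      have hpm : ¬ (p : ℤ) ∣ m := fun hd => hℓ ((hiff ℓ m hm).mpr hd)
      have hc0 : ((Ring.choose ((ℓ : ℤ) - (d : ℤ)) (p ^ a) : ℤ) : k) ≠ 0 := by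
        rw [hcval ℓ m hm]
        intro h0
        exact hpm ((CharP.intCast_eq_zero_iff k p m).mp h0)
      have := congrArg (PowerSeries.coeff ℓ) hΘ
      rw [coeffMulOp, PowerSeries.coeff_mk, map_zero] at this
      exact (mul_eq_zero.mp this).resolve_left hc0
    · exact hVa ℓ h
  · intro hV1
    constructor
    · intro ℓ h
      exact hV1 ℓ (fun h1 => h (hsucc ℓ h1))
    · ext ℓ
      rw [coeffMulOp, PowerSeries.coeff_mk, map_zero]
      by_cases h : ℓ ≡ d [MOD p ^ (a + 1)]
      · obtain ⟨m, hm⟩ := hmod ℓ (hsucc ℓ h)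
        have : ((Ring.choose ((ℓ : ℤ) - (d : ℤ)) (p ^ a) : ℤ) : k) = 0 := by
          rw [hcval ℓ m hm]
          exact (CharP.intCast_eq_zero_iff k p m).mpr ((hiff ℓ m hm).mp h)
        rw [this, zero_mul]
      · rw [hV1 ℓ h, mul_zero]
end

section
/- Let p be a prime, k a field of characteristic p, d̃ a natural number, and a a natural number. Let Θ_a : k[[t]] → k[[t]] be the k-linear operator multiplying the ℓ-th coefficient of a power series by the image in k of binom(ℓ − d̃, p^a), and let W ⊆ k[[t]] be the subspace of series whose ℓ-th coefficient vanishes unless both ℓ ≡ d̃ (mod p^a) and ℓ ≥ p^a + (d̃ mod p^a). Set r := d̃ mod p^{a+1} if the a-th base-p digit of d̃ is nonzero, and r := (d̃ mod p^{a+1}) + p^{a+1} if the a-th base-p digit of d̃ is zero. Then {f ∈ W : Θ_a f = 0} = t^r · k[[t^{p^{a+1}}]], i.e., it consists exactly of those series whose ℓ-th coefficient vanishes unless both ℓ ≡ d̃ (mod p^{a+1}) and ℓ ≥ r. -/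
open Finset in
theorem choose_pow_mul_modEq (p a : ℕ) (hp : p.Prime) (n : ℕ) :
    (Nat.choose (p^a * n) (p^a) : ℤ) ≡ (n : ℤ) [ZMOD p] := by
  haveI : Fact p.Prime := ⟨hp⟩
  have h := Choose.choose_modEq_choose_mul_prod_range_choose (p := p) (n := p^a*n) (k := p^a) a
  have h1 : (p^a*n) / p^a = n := Nat.mul_div_cancel_left _ (Nat.pow_pos hp.pos)
  have h2 : p^a / p^a = 1 := Nat.div_self (Nat.pow_pos hp.pos)
  rw [h1, h2] at h
  have h3 : ∀ i ∈ range a, Nat.choose ((p^a*n) / p ^ i % p) (p^a / p ^ i % p) = 1 := by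
    intro i hi
    have hia : i < a := mem_range.mp hi
    have hd : p^a / p^i = p^(a-i) := Nat.pow_div hia.le hp.pos
    have hz : p^(a-i) % p = 0 :=
      Nat.mod_eq_zero_of_dvd (dvd_pow_self p (Nat.sub_ne_zero_of_lt hia)) 
    rw [hd, hz, Nat.choose_zero_right]
  rw [Finset.prod_congr rfl h3, Finset.prod_const_one, Nat.cast_one, mul_one, Nat.choose_one_right] at h
  exact h

theorem ring_choose_shift (p a : ℕ) (hp : p.Prime) (k : Type*) [Field k] [CharP k p] (x : ℤ) :
    ((Ring.choose (x + (p:ℤ)^(a+1)) (p^a) : ℤ) : k) = ((Ring.choose x (p^a) : ℤ) : k) := by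
  rw [Ring.add_choose_eq _ (Commute.all _ _)]
  rw [Int.cast_sum]
  rw [Finset.sum_eq_single_of_mem (p^a, 0) (by simp [Finset.mem_antidiagonal])]
  · simp
  · rintro ⟨i, j⟩ hij hne
    have hsum : i + j = p^a := Finset.HasAntidiagonal.mem_antidiagonal.mp hij
    have hj : j ≠ 0 := by rintro rfl; exact hne (by simp [← hsum])
    have hcast : ((p:ℤ))^(a+1) = ((p^(a+1) : ℕ) : ℤ) := by push_cast; ring
    have : Ring.choose ((p:ℤ)^(a+1)) j = ((p^(a+1)).choose j : ℤ) := by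
      rw [hcast, Ring.choose_natCast]
    simp only [this]
    have hdvd : p ∣ (p^(a+1)).choose j := by
      refine hp.dvd_choose_pow hj ?_
      have : j ≤ p ^ a := by omega
      have hlt : p ^ a < p ^ (a+1) := Nat.pow_lt_pow_succ hp.one_lt
      omega
    rw [Int.cast_mul]
    have : (((p^(a+1)).choose j : ℤ) : k) = 0 := by
      rw [Int.cast_natCast, CharP.cast_eq_zero_iff k p _ |>.mpr hdvd]
    rw [this, mul_zero]

theorem ring_choose_shift_mul (p a : ℕ) (hp : p.Prime) (k : Type*) [Field k] [CharP k p]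
    (x : ℤ) (q : ℤ) :
    ((Ring.choose (x + (p:ℤ)^(a+1) * q) (p^a) : ℤ) : k) = ((Ring.choose x (p^a) : ℤ) : k) := by
  induction q using Int.induction_on with
  | zero => simp
  | succ n ih =>
      have : x + (p:ℤ)^(a+1) * (n+1) = (x + (p:ℤ)^(a+1) * n) + (p:ℤ)^(a+1) := by ring
      rw [this, ring_choose_shift p a hp k, ih]
  | pred n ih =>
      have : x + (p:ℤ)^(a+1) * (-n) = (x + (p:ℤ)^(a+1) * (-n-1)) + (p:ℤ)^(a+1) := by ring
      rw [this, ring_choose_shift p a hp k] at ih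
      exact ih

theorem ring_choose_mul_val (p a : ℕ) (hp : p.Prime) (k : Type*) [Field k] [CharP k p]
    (m : ℤ) :
    ((Ring.choose ((p:ℤ)^a * m) (p^a) : ℤ) : k) = (m : k) := by
  have hp0 : (0:ℤ) < p := by exact_mod_cast hp.pos
  set s : ℤ := m % p with hs
  have hs0 : 0 ≤ s := Int.emod_nonneg m (by positivity)
  have key : (p:ℤ)^a * m = (p:ℤ)^a * s + (p:ℤ)^(a+1) * (m / p) := by
    rw [hs, Int.emod_def]; ring
  rw [key, ring_choose_shift_mul p a hp k]
  obtain ⟨n, hn⟩ : ∃ n : ℕ, s = (n : ℤ) := ⟨s.toNat, (Int.toNat_of_nonneg hs0).symm⟩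
  have hcast : (p:ℤ)^a * s = ((p^a * n : ℕ) : ℤ) := by rw [hn]; push_cast; ring
  rw [hcast, Ring.choose_natCast]
  have hdvd : (p:ℤ) ∣ ((p^a*n).choose (p^a) : ℤ) - n := Int.ModEq.dvd (choose_pow_mul_modEq p a hp n).symm
  have hp0k : ((p:ℤ):k) = 0 := by exact_mod_cast CharP.cast_eq_zero k p
  have h1 : ((((p^a*n).choose (p^a) : ℤ)) : k) = ((n:ℤ) : k) := by
    obtain ⟨c, hc⟩ := hdvd
    have : (((p^a*n).choose (p^a) : ℤ) : k) - ((n:ℤ):k) = ((p:ℤ):k) * (c:k) := by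
      rw [← Int.cast_mul, ← Int.cast_sub, hc]
    rw [hp0k, zero_mul, sub_eq_zero] at this
    exact this
  rw [h1, ← hn]
  have h2 : ((m - s : ℤ) : k) = 0 := by
    have : m - s = p * (m / p) := by rw [hs, Int.emod_def]; ring
    rw [this, Int.cast_mul, hp0k, zero_mul]
  rw [Int.cast_sub] at h2
  exact (sub_eq_zero.mp h2).symm

theorem key_arith (p : ℕ) (hp : p.Prime) (k : Type*) [Field k] [CharP k p] (d a r : ℕ)
    (hr : r = if d / p ^ a % p ≠ 0 then d % p ^ (a + 1) else d % p ^ (a + 1) + p ^ (a + 1))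
    (ℓ : ℕ) :
    ((ℓ ≡ d [MOD p ^ a] ∧ p ^ a + d % p ^ a ≤ ℓ) ∧
        ((Ring.choose ((ℓ : ℤ) - (d : ℤ)) (p ^ a) : ℤ) : k) = 0) ↔
      (ℓ ≡ d [MOD p ^ (a + 1)] ∧ r ≤ ℓ) := by
  have hu : 0 < p ^ a := Nat.pow_pos hp.pos
  have hP : 0 < p ^ (a + 1) := Nat.pow_pos hp.pos
  have huP : p ^ a ∣ p ^ (a + 1) := pow_dvd_pow p a.le_succ
  -- digit facts
  have hud : d % p ^ (a + 1) % p ^ a = d % p ^ a := Nat.mod_mod_of_dvd d huP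
  have hdig : d % p ^ (a + 1) / p ^ a = d / p ^ a % p := by
    rw [pow_succ]; exact Nat.mod_mul_right_div_self d (p ^ a) p
  have hdm : p ^ a * (d % p ^ (a + 1) / p ^ a) + d % p ^ (a + 1) % p ^ a = d % p ^ (a + 1) :=
    Nat.div_add_mod _ _
  -- r ≥ p^a + d % p^a
  have hrge : p ^ a + d % p ^ a ≤ r := by
    by_cases hd : d / p ^ a % p ≠ 0
    · rw [hr, if_pos hd]
      have : 1 ≤ d % p ^ (a + 1) / p ^ a := by rw [hdig]; omega
      nlinarith [hdm, hud]
    · rw [hr, if_neg hd]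
      have hPa : p ^ a ≤ p ^ (a+1) := Nat.le_of_dvd hP huP
      omega
  -- the Ring.choose criterion
  have hchoose : ∀ m : ℤ, (ℓ : ℤ) - (d : ℤ) = (p:ℤ)^a * m →
      (((Ring.choose ((ℓ : ℤ) - (d : ℤ)) (p ^ a) : ℤ) : k) = 0 ↔ (p:ℤ) ∣ m) := by
    intro m hm
    rw [hm, ring_choose_mul_val p a hp k m, CharP.intCast_eq_zero_iff k p m]
  constructor
  · rintro ⟨⟨hmod, hle⟩, hc⟩
    obtain ⟨m, hm⟩ : ((p:ℤ)^a) ∣ (ℓ : ℤ) - (d : ℤ) := by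
      have := (Nat.modEq_iff_dvd (n := p ^ a)).mp hmod
      push_cast at this ⊢
      exact dvd_sub_comm.mp this
    have hpm : (p:ℤ) ∣ m := (hchoose m hm).mp hc
    have hPdvd : ((p ^ (a+1) : ℕ) : ℤ) ∣ (d : ℤ) - (ℓ : ℤ) := by
      obtain ⟨m', hm'⟩ := hpm
      refine dvd_sub_comm.mp ⟨m', ?_⟩
      push_cast
      rw [hm, hm']; ring
    have hmod1 : ℓ ≡ d [MOD p ^ (a + 1)] := (Nat.modEq_iff_dvd).mpr hPdvd
    refine ⟨hmod1, ?_⟩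
    have hlmod : ℓ % p ^ (a+1) = d % p ^ (a+1) := hmod1
    by_cases hd : d / p ^ a % p ≠ 0
    · rw [hr, if_pos hd]
      calc d % p ^ (a+1) = ℓ % p ^ (a+1) := hlmod.symm
        _ ≤ ℓ := Nat.mod_le _ _
    · rw [hr, if_neg hd]
      push_neg at hd
      have he : d % p ^ (a+1) = d % p ^ a := by
        have h := hdm
        rw [hdig, hd, Nat.mul_zero, Nat.zero_add, hud] at h
        exact h.symm
      have hq := Nat.div_add_mod ℓ (p ^ (a+1))
      rw [hlmod] at hq
      rcases Nat.eq_zero_or_pos (ℓ / p ^ (a+1)) with h0 | h1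
      · rw [h0, Nat.mul_zero, Nat.zero_add] at hq
        omega
      · have h2 : p ^ (a+1) ≤ p ^ (a+1) * (ℓ / p ^ (a+1)) := Nat.le_mul_of_pos_right _ h1
        linarith
  · rintro ⟨hmod1, hle⟩
    have hmod : ℓ ≡ d [MOD p ^ a] := hmod1.of_dvd huP
    refine ⟨⟨hmod, le_trans hrge hle⟩, ?_⟩
    obtain ⟨m, hm⟩ : ((p:ℤ)^a) ∣ (ℓ : ℤ) - (d : ℤ) := by
      have := (Nat.modEq_iff_dvd (n := p ^ a)).mp hmod
      push_cast at this ⊢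
      exact dvd_sub_comm.mp this
    refine (hchoose m hm).mpr ?_
    have hPdvd : ((p:ℤ)^a * (p:ℤ)) ∣ ((p:ℤ)^a * m) := by
      have := (Nat.modEq_iff_dvd (n := p ^ (a+1))).mp hmod1
      have h2 : ((p:ℤ)^a * (p:ℤ)) ∣ (ℓ : ℤ) - (d : ℤ) := by
        have h3 := dvd_sub_comm.mp this
        push_cast at h3
        rwa [pow_succ] at h3
      rwa [hm] at h2
    exact (mul_dvd_mul_iff_left (pow_ne_zero a (by exact_mod_cast hp.ne_zero : (p:ℤ) ≠ 0))).mp hPdvd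


/-- Let `p` be a prime, `k` a field of characteristic `p`, `d̃` and `a`
natural numbers. Let `Θ_a` multiply the `ℓ`-th coefficient by the image in `k` of
`binom(ℓ − d̃, p^a)`, and let `W ⊆ k[[t]]` consist of the series whose `ℓ`-th coefficient
vanishes unless both `ℓ ≡ d̃ (mod p^a)` and `ℓ ≥ p^a + (d̃ mod p^a)`. Set
`r := d̃ mod p^(a+1)` if the `a`-th base-`p` digit of `d̃` is nonzero, and
`r := (d̃ mod p^(a+1)) + p^(a+1)` otherwise. Then `{f ∈ W : Θ_a f = 0}` consists exactly of
those series whose `ℓ`-th coefficient vanishes unless both `ℓ ≡ d̃ (mod p^(a+1))` and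
`ℓ ≥ r`. -/
theorem kernel_theta_twisted_eq
    (p : ℕ) (hp : p.Prime) (k : Type*) [Field k] [CharP k p] (d a : ℕ)
    (r : ℕ)
    (hr : r = if d / p ^ a % p ≠ 0 then d % p ^ (a + 1) else d % p ^ (a + 1) + p ^ (a + 1))
    (f : PowerSeries k) :
    ((∀ ℓ : ℕ, ¬ (ℓ ≡ d [MOD p ^ a] ∧ p ^ a + d % p ^ a ≤ ℓ) →
          PowerSeries.coeff ℓ f = 0) ∧
        coeffMulOp k
          (fun ℓ => ((Ring.choose ((ℓ : ℤ) - (d : ℤ)) (p ^ a) : ℤ) : k)) f = 0) ↔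
      (∀ ℓ : ℕ, ¬ (ℓ ≡ d [MOD p ^ (a + 1)] ∧ r ≤ ℓ) → PowerSeries.coeff ℓ f = 0) := by
  have hop : (coeffMulOp k
      (fun ℓ => ((Ring.choose ((ℓ : ℤ) - (d : ℤ)) (p ^ a) : ℤ) : k)) f = 0) ↔
      ∀ ℓ : ℕ, ((Ring.choose ((ℓ : ℤ) - (d : ℤ)) (p ^ a) : ℤ) : k) *
        PowerSeries.coeff ℓ f = 0 := by
    constructor
    · intro h ℓ
      have := congrArg (PowerSeries.coeff ℓ) h
      simpa [coeffMulOp] using this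
    · intro h
      ext ℓ
      simpa [coeffMulOp] using h ℓ
  rw [hop]
  constructor
  · rintro ⟨h1, h2⟩ ℓ hB
    by_cases hA : ℓ ≡ d [MOD p ^ a] ∧ p ^ a + d % p ^ a ≤ ℓ
    · have hc : ((Ring.choose ((ℓ : ℤ) - (d : ℤ)) (p ^ a) : ℤ) : k) ≠ 0 := by
        intro hc0
        exact hB ((key_arith p hp k d a r hr ℓ).mp ⟨hA, hc0⟩)
      have := h2 ℓ
      exact (mul_eq_zero.mp this).resolve_left hc
    · exact h1 ℓ hA
  · intro h
    constructor
    · intro ℓ hA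
      refine h ℓ fun hB => hA ((key_arith p hp k d a r hr ℓ).mpr hB).1
    · intro ℓ
      by_cases hc : ((Ring.choose ((ℓ : ℤ) - (d : ℤ)) (p ^ a) : ℤ) : k) = 0
      · rw [hc, zero_mul]
      · have hcf : PowerSeries.coeff ℓ f = 0 := by
          refine h ℓ fun hB => hc ((key_arith p hp k d a r hr ℓ).mpr hB).2
        rw [hcf, mul_zero]
end
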